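/- Suppose the random variables Y_{1,m} − Y_{0,m} = B do not depend on m ∈ 𝓜 (finite support of M₀), i.e., there is a single integrable random variable B with Y_{1,m} − Y_{0,m} = B for all m. Then Σ_{m∈𝓜} E[ Cov(𝟙(M₀=m), Y_{1,m} − Y_{0,m} | C) ] = 0, and hence NDE = NDE^R. -/

import Mathlib

open MeasureTheory

/-- The σ-algebra generated by the baseline covariate `C`. -/
def sigmaGen {Ω : Type*} (C : Ω → ℝ) : MeasurableSpace Ω :=
  MeasurableSpace.comap C inferInstance

/-- Conditional expectation given `C`: `E[f | C]`. -/
noncomputable def condE {Ω : Type*} [MeasurableSpace Ω] (μ : Measure Ω) (C : Ω → ℝ)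
    (f : Ω → ℝ) : Ω → ℝ :=
  μ[f | sigmaGen C]

/-- Conditional covariance given `C`: `Cov(f, g | C) = E[fg|C] − E[f|C]E[g|C]`. -/
noncomputable def condCov {Ω : Type*} [MeasurableSpace Ω] (μ : Measure Ω) (C : Ω → ℝ)
    (f g : Ω → ℝ) : Ω → ℝ :=
  fun ω => condE μ C (fun ω' => f ω' * g ω') ω - condE μ C f ω * condE μ C g ω

/-- Indicator `𝟙(X = m)` as a real-valued random variable. -/
noncomputable def ind {Ω : Type*} (X : Ω → ℝ) (m : ℝ) : Ω → ℝ :=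
  fun ω => if X ω = m then 1 else 0

/-!
The indicators `𝟙(M₀ = m)` sum to one, and so (a.e.) do their conditional expectations given `C`.
Hence both `∑ₘ E[E[𝟙(M₀ = m) B | C]]` and `∑ₘ E[E[𝟙(M₀ = m) | C] E[B | C]]` equal `E[B]`: their
difference is the summed conditional covariance, the second sum is `NDE^R`, and `NDE = E[B]`.
-/

open Finset

lemma sigmaGen_le {Ω : Type*} [MeasurableSpace Ω] {C : Ω → ℝ} (hC : Measurable C) :
    sigmaGen C ≤ ‹MeasurableSpace Ω› :=
  hC.comap_le

section PartitionOfUnity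

variable {Ω ι : Type*} [MeasurableSpace Ω] {μ : Measure Ω} {C : Ω → ℝ}
  {s : Finset ι} {f : ι → Ω → ℝ} {g : Ω → ℝ}

lemma sum_integral_condE_mul [IsFiniteMeasure μ] (hC : Measurable C)
    (hfg : ∀ i ∈ s, Integrable (fun ω => f i ω * g ω) μ)
    (hsum : ∀ᵐ ω ∂μ, ∑ i ∈ s, f i ω = 1) :
    ∑ i ∈ s, ∫ ω, condE μ C (fun ω' => f i ω' * g ω') ω ∂μ = ∫ ω, g ω ∂μ := by
  calc ∑ i ∈ s, ∫ ω, condE μ C (fun ω' => f i ω' * g ω') ω ∂μ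
      = ∑ i ∈ s, ∫ ω, f i ω * g ω ∂μ :=
        sum_congr rfl fun i _ => integral_condExp (sigmaGen_le hC)
    _ = ∫ ω, ∑ i ∈ s, f i ω * g ω ∂μ := (integral_finsetSum _ hfg).symm
    _ = ∫ ω, g ω ∂μ := integral_congr_ae <| by
        filter_upwards [hsum] with ω hω
        rw [← sum_mul, hω, one_mul]

lemma sum_condE_eq_one [IsFiniteMeasure μ] (hC : Measurable C) (hf : ∀ i ∈ s, Integrable (f i) μ)
    (hsum : ∀ᵐ ω ∂μ, ∑ i ∈ s, f i ω = 1) :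
    ∀ᵐ ω ∂μ, ∑ i ∈ s, condE μ C (f i) ω = 1 := by
  have hsum' : ∑ i ∈ s, f i =ᵐ[μ] fun _ => (1 : ℝ) := by
    filter_upwards [hsum] with ω hω
    rwa [Finset.sum_apply]
  have h := (condExp_congr_ae (m := sigmaGen C) hsum').symm.trans
    (condExp_finsetSum hf (sigmaGen C))
  rw [condExp_const (sigmaGen_le hC)] at h
  filter_upwards [h] with ω hω
  rw [hω, Finset.sum_apply]
  rfl

lemma integrable_condE_mul_condE (hC : Measurable C) {R : ℝ} {f : Ω → ℝ}
    (hf : ∀ᵐ ω ∂μ, |f ω| ≤ R) :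
    Integrable (fun ω => condE μ C f ω * condE μ C g ω) μ :=
  integrable_condExp.bdd_mul
    (stronglyMeasurable_condExp.mono (sigmaGen_le hC)).aestronglyMeasurable
    (ae_bdd_abs_condExp_of_ae_bdd_abs hf)

lemma sum_integral_condE_mul_condE [IsFiniteMeasure μ] (hC : Measurable C) {R : ℝ}
    (hf : ∀ i ∈ s, Integrable (f i) μ) (hf_bdd : ∀ i ∈ s, ∀ᵐ ω ∂μ, |f i ω| ≤ R)
    (hsum : ∀ᵐ ω ∂μ, ∑ i ∈ s, f i ω = 1) :
    ∑ i ∈ s, ∫ ω, condE μ C (f i) ω * condE μ C g ω ∂μ = ∫ ω, g ω ∂μ := by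
  calc ∑ i ∈ s, ∫ ω, condE μ C (f i) ω * condE μ C g ω ∂μ
      = ∫ ω, ∑ i ∈ s, condE μ C (f i) ω * condE μ C g ω ∂μ :=
        (integral_finsetSum _ fun i hi => integrable_condE_mul_condE hC (hf_bdd i hi)).symm
    _ = ∫ ω, condE μ C g ω ∂μ := integral_congr_ae <| by
        filter_upwards [sum_condE_eq_one hC hf hsum] with ω hω
        rw [← sum_mul, hω, one_mul]
    _ = ∫ ω, g ω ∂μ := integral_condExp (sigmaGen_le hC)

lemma sum_integral_condCov_eq_zero [IsFiniteMeasure μ] (hC : Measurable C) {R : ℝ}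
    (hf : ∀ i ∈ s, Integrable (f i) μ) (hf_bdd : ∀ i ∈ s, ∀ᵐ ω ∂μ, |f i ω| ≤ R)
    (hsum : ∀ᵐ ω ∂μ, ∑ i ∈ s, f i ω = 1) (hg : Integrable g μ) :
    ∑ i ∈ s, ∫ ω, condCov μ C (f i) g ω ∂μ = 0 := by
  have hfg : ∀ i ∈ s, Integrable (fun ω => f i ω * g ω) μ := fun i hi =>
    hg.bdd_mul (hf i hi).aestronglyMeasurable (hf_bdd i hi)
  calc ∑ i ∈ s, ∫ ω, condCov μ C (f i) g ω ∂μ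
      = ∑ i ∈ s, (∫ ω, condE μ C (fun ω' => f i ω' * g ω') ω ∂μ
          - ∫ ω, condE μ C (f i) ω * condE μ C g ω ∂μ) :=
        sum_congr rfl fun i hi =>
          integral_sub integrable_condExp (integrable_condE_mul_condE hC (hf_bdd i hi))
    _ = 0 := by
      rw [sum_sub_distrib, sum_integral_condE_mul hC hfg hsum,
        sum_integral_condE_mul_condE hC hf hf_bdd hsum, sub_self]

end PartitionOfUnity

section Indicator

variable {Ω : Type*} {X : Ω → ℝ}

lemma abs_ind_le_one (m : ℝ) (ω : Ω) : |ind X m ω| ≤ 1 := by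
  unfold ind
  split_ifs <;> simp

lemma integrable_ind [MeasurableSpace Ω] (μ : Measure Ω) [IsFiniteMeasure μ] (hX : Measurable X)
    (m : ℝ) : Integrable (ind X m) μ :=
  .of_bound (Measurable.ite (hX (measurableSet_singleton m)) measurable_const
    measurable_const).aestronglyMeasurable 1 (.of_forall (abs_ind_le_one m))

lemma sum_ind_eq_one {s : Finset ℝ} (hX : ∀ ω, X ω ∈ s) (ω : Ω) : ∑ m ∈ s, ind X m ω = 1 := by
  simp [ind, sum_ite_eq, hX ω]

end Indicator

theorem stmt14_general {Ω : Type*} [MeasurableSpace Ω] (μ : Measure Ω) [IsProbabilityMeasure μ]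
    (C : Ω → ℝ) (hC : Measurable C)
    (𝓜 : Finset ℝ) (M0 : Ω → ℝ) (hM0 : ∀ ω, M0 ω ∈ 𝓜) (hM0meas : Measurable M0)
    (Y1 Y0 : ℝ → Ω → ℝ)
    (B : Ω → ℝ) (hB : Integrable B μ)
    (hBeq : ∀ m ∈ 𝓜, ∀ ω, Y1 m ω - Y0 m ω = B ω) :
    (∑ m ∈ 𝓜, ∫ ω, condCov μ C (ind M0 m) (fun ω' => Y1 m ω' - Y0 m ω') ω ∂μ = 0)
    ∧ (∫ ω, (∑ m ∈ 𝓜, ind M0 m ω * Y1 m ω - ∑ m ∈ 𝓜, ind M0 m ω * Y0 m ω) ∂μ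
        = ∑ m ∈ 𝓜, ∫ ω, (condE μ C (fun ω' => Y1 m ω' - Y0 m ω') ω
            * condE μ C (ind M0 m) ω) ∂μ) := by
  have hdiff : ∀ m ∈ 𝓜, (fun ω => Y1 m ω - Y0 m ω) = B := fun m hm => funext (hBeq m hm)
  have hind : ∀ m ∈ 𝓜, Integrable (ind M0 m) μ := fun m _ => integrable_ind μ hM0meas m
  have hbdd : ∀ m ∈ 𝓜, ∀ᵐ ω ∂μ, |ind M0 m ω| ≤ 1 := fun m _ =>
    .of_forall (abs_ind_le_one m)
  have hsum : ∀ᵐ ω ∂μ, ∑ m ∈ 𝓜, ind M0 m ω = 1 := .of_forall (sum_ind_eq_one hM0)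
  refine ⟨?_, ?_⟩
  · rw [← sum_integral_condCov_eq_zero hC hind hbdd hsum hB]
    exact sum_congr rfl fun m hm => by rw [hdiff m hm]
  · calc ∫ ω, (∑ m ∈ 𝓜, ind M0 m ω * Y1 m ω - ∑ m ∈ 𝓜, ind M0 m ω * Y0 m ω) ∂μ
        = ∫ ω, B ω ∂μ := by
          congr 1 with ω
          rw [← sum_sub_distrib, ← one_mul (B ω), ← sum_ind_eq_one hM0 ω, sum_mul]
          exact sum_congr rfl fun m hm => by rw [← mul_sub, hBeq m hm ω]
      _ = ∑ m ∈ 𝓜, ∫ ω, condE μ C (ind M0 m) ω * condE μ C B ω ∂μ :=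
          (sum_integral_condE_mul_condE hC hind hbdd hsum).symm
      _ = _ := sum_congr rfl fun m hm => by simp_rw [hdiff m hm, mul_comm]

/-- Proposition 5, NDE part: if Y_{1,m} − Y_{0,m} = B does not depend
on m, then the sum of conditional covariances vanishes and NDE = NDE^R. -/
theorem stmt14 {Ω : Type*} [MeasurableSpace Ω] (μ : Measure Ω) [IsProbabilityMeasure μ]
    (C : Ω → ℝ) (hC : Measurable C)
    (𝓜 : Finset ℝ) (M0 : Ω → ℝ) (hM0 : ∀ ω, M0 ω ∈ 𝓜) (hM0meas : Measurable M0)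
    (Y1 Y0 : ℝ → Ω → ℝ)
    (hY1 : ∀ m ∈ 𝓜, Integrable (Y1 m) μ) (hY0 : ∀ m ∈ 𝓜, Integrable (Y0 m) μ)
    (B : Ω → ℝ) (hB : Integrable B μ)
    (hBeq : ∀ m ∈ 𝓜, ∀ ω, Y1 m ω - Y0 m ω = B ω) :
    (∑ m ∈ 𝓜, ∫ ω, condCov μ C (ind M0 m) (fun ω' => Y1 m ω' - Y0 m ω') ω ∂μ = 0)
    ∧ (∫ ω, (∑ m ∈ 𝓜, ind M0 m ω * Y1 m ω - ∑ m ∈ 𝓜, ind M0 m ω * Y0 m ω) ∂μ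
        = ∑ m ∈ 𝓜, ∫ ω, (condE μ C (fun ω' => Y1 m ω' - Y0 m ω') ω
            * condE μ C (ind M0 m) ω) ∂μ) :=
  stmt14_general μ C hC 𝓜 M0 hM0 hM0meas Y1 Y0 B hB hBeq
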